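/- arXiv:2206.15278 — 2 statements merged into one kernel-verified Lean document; each statement's English description precedes it below -/
import Mathlib

section
/- Let K be a number field of degree d and let j be a positive integer with j > ρ_∞(K)·d / log 2. Let K_j be the finite extension of K generated by the j-th roots of all units of O_K. Then every nonzero proper principal ideal 𝔄 ⊊ O_K is strictly large in K_j: there exists x ∈ O_{K_j} with 𝔄 O_{K_j} = x O_{K_j} and |τ(x)| > 1 for every embedding τ : K_j → ℂ. -/
open NumberField Polynomial

/-- The logarithmic embedding of a unit: the coordinate at an infinite place `w`
is `mult w * log (w x)` (i.e. `log|σ(x)|` at real places, `2 log|σ(x)|` at complex places). -/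
noncomputable def logEmb (K : Type) [Field K] [NumberField K] (u : (𝓞 K)ˣ) :
    NumberField.InfinitePlace K → ℝ :=
  fun w => (w.mult : ℝ) * Real.log (w ((u : 𝓞 K) : K))

/-- The covering radius `ρ_∞(K)` of the lattice of units with respect to the sup norm. -/
noncomputable def rhoInf (K : Type) [Field K] [NumberField K] : ℝ :=
  ⨆ v : {v : NumberField.InfinitePlace K → ℝ // ∑ w, v w = 0},
    ⨅ u : (𝓞 K)ˣ, ‖(v : NumberField.InfinitePlace K → ℝ) - logEmb K u‖

/-!
Write `𝔄 = (a)`, so `|N(a)| ≥ 2`, and put `t = log |N(a^j)| / d ≥ j log 2 / d > ρ_∞(K)`.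
The unit lattice comes within sup-distance `t` of every point of the trace-zero hyperplane,
so some unit `u` brings `ℓ(a^j u)` within `t` of the diagonal point `(mult w · t)_w`; then
`mult w · log w(a^j u) > (mult w - 1) t ≥ 0` at every place `w`. A `j`-th root `η` of `u` in `K_j`
is a unit of `𝓞 K_j`, so `x = aη` generates `𝔄 𝓞 K_j`, and `|τ x|^j = w(a^j u) > 1` for every
embedding `τ`, where `w` is the place below `τ`.
-/

theorem ZLattice.exists_norm_sub_le {E : Type*} [NormedAddCommGroup E] [NormedSpace ℝ E]
    [FiniteDimensional ℝ E] (L : Submodule ℤ E) [DiscreteTopology L] [IsZLattice ℝ L] :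
    ∃ C : ℝ, ∀ x : E, ∃ y ∈ L, ‖x - y‖ ≤ C := by
  let b := (Module.Free.chooseBasis ℤ L).ofZLatticeBasis ℝ L
  refine ⟨∑ i, ‖b i‖, fun x => ⟨ZSpan.floor b x, ?_, ZSpan.norm_fract_le b x⟩⟩
  exact ((Module.Free.chooseBasis ℤ L).ofZLatticeBasis_span ℝ).le (ZSpan.floor b x).2

theorem norm_le_card_mul_norm_restrict_of_sum_eq_zero {ι : Type*} [Fintype ι] [DecidableEq ι]
    {y : ι → ℝ} (hy : ∑ i, y i = 0) (i₀ : ι) :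
    ‖y‖ ≤ Fintype.card ι * ‖fun i : {i // i ≠ i₀} => y i‖ := by
  set r := ‖fun i : {i // i ≠ i₀} => y i‖
  have hcard : (Fintype.card {i // i ≠ i₀} : ℝ) ≤ Fintype.card ι := by
    exact_mod_cast Fintype.card_subtype_le _
  refine (pi_norm_le_iff_of_nonneg (by positivity)).mpr fun i => ?_
  by_cases hi : i = i₀
  · subst hi
    have hy₀ : y i = -∑ i' : {i' // i' ≠ i}, y i' := by
      rw [Fintype.sum_eq_add_sum_subtype_ne _ i] at hy
      linarith
    calc ‖y i‖ = ‖∑ i' : {i' // i' ≠ i}, y i'‖ := by rw [hy₀, norm_neg]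
      _ ≤ ∑ _i' : {i' // i' ≠ i}, r :=
          (norm_sum_le _ _).trans <| Finset.sum_le_sum fun i' _ =>
            norm_le_pi_norm (fun i' : {i' // i' ≠ i} => y i') i'
      _ ≤ Fintype.card ι * r := by
          rw [Finset.sum_const, Finset.card_univ, nsmul_eq_mul]
          gcongr
  · calc ‖y i‖ ≤ r := norm_le_pi_norm (fun i' : {i' // i' ≠ i₀} => y i') ⟨i, hi⟩
      _ ≤ Fintype.card ι * r :=
          le_mul_of_one_le_left (norm_nonneg _) (by exact_mod_cast Fintype.card_pos_iff.mpr ⟨i⟩)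

namespace NumberField

open InfinitePlace NumberField.Units dirichletUnitTheorem

section Extension

variable {K L : Type*} [Field K] [Field L] [Algebra K L]

theorem exists_unit_pow_eq_algebraMap_of_splits {j : ℕ} (hj : 0 < j) (u : (𝓞 K)ˣ)
    (hsplit : ((X ^ j - C ((u : 𝓞 K) : K)).map (algebraMap K L)).Splits) :
    ∃ η : (𝓞 L)ˣ, (η : 𝓞 L) ^ j = algebraMap (𝓞 K) (𝓞 L) u := by
  have hdeg : ((X ^ j - C ((u : 𝓞 K) : K)).map (algebraMap K L)).degree ≠ 0 := by
    rw [degree_map, degree_X_pow_sub_C hj]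
    exact_mod_cast hj.ne'
  obtain ⟨y, hy⟩ := hsplit.exists_eval_eq_zero hdeg
  have hyj : y ^ j = algebraMap K L ((u : 𝓞 K) : K) := by
    simpa [sub_eq_zero] using hy
  have hy_int : IsIntegral ℤ y :=
    IsIntegral.of_pow hj (hyj ▸ (u : 𝓞 K).isIntegral_coe.algebraMap)
  have hpow : (⟨y, hy_int⟩ : 𝓞 L) ^ j = algebraMap (𝓞 K) (𝓞 L) u :=
    RingOfIntegers.ext hyj
  exact ⟨((isUnit_pow_iff hj.ne').mp (hpow ▸ u.isUnit.map _)).unit, hpow⟩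

theorem InfinitePlace.one_lt_norm_of_pow_eq {j : ℕ} (hj : j ≠ 0) {z : K}
    (hz : ∀ w : InfinitePlace K, 1 < w z) {x : L} (hx : x ^ j = algebraMap K L z)
    (τ : L →+* ℂ) : 1 < ‖τ x‖ := by
  have := hz (mk (τ.comp (algebraMap K L)))
  rw [apply, RingHom.comp_apply, ← hx, map_pow, norm_pow] at this
  exact (one_lt_pow_iff_of_nonneg (norm_nonneg _) hj).mp this

end Extension

theorem InfinitePlace.sum_mult_mul_log_eq_log_abs_norm {K : Type*} [Field K] [NumberField K]
    {x : K} (hx : x ≠ 0) :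
    ∑ w : InfinitePlace K, w.mult * Real.log (w x) = Real.log |(Algebra.norm ℚ x : ℝ)| := by
  rw [← Rat.cast_abs, ← prod_eq_abs_norm,
    Real.log_prod fun w _ => pow_ne_zero _ (by simpa using hx)]
  simp only [Real.log_pow]

theorem RingOfIntegers.two_le_abs_norm {K : Type*} [Field K] [NumberField K] {a : 𝓞 K}
    (h0 : a ≠ 0) (hu : ¬IsUnit a) : 2 ≤ |(Algebra.norm ℚ (a : K) : ℝ)| := by
  rw [← Algebra.coe_norm_int, Rat.cast_intCast, ← Int.cast_abs]
  have hne0 : Algebra.norm ℤ a ≠ 0 := Algebra.norm_ne_zero_iff.mpr h0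
  have hne1 : |Algebra.norm ℤ a| ≠ 1 := fun h => hu <| isUnit_iff_norm.mpr <| by
    rw [RingOfIntegers.coe_norm, ← Algebra.coe_norm_int]
    exact_mod_cast h
  have : 2 ≤ |Algebra.norm ℤ a| := by
    have := abs_pos.mpr hne0
    omega
  exact_mod_cast this

variable {K : Type} [Field K] [NumberField K]

theorem exists_norm_sub_logEmb_le :
    ∃ C : ℝ, ∀ v : InfinitePlace K → ℝ, ∑ w, v w = 0 →
      ∃ u : (𝓞 K)ˣ, ‖v - logEmb K u‖ ≤ C := by
  classical
  obtain ⟨C, hC⟩ := ZLattice.exists_norm_sub_le (unitLattice K)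
  refine ⟨Fintype.card (InfinitePlace K) * C, fun v hv => ?_⟩
  obtain ⟨-, ⟨u, -, rfl⟩, hu⟩ := hC fun w => v w
  have hsum : ∑ w, (v - logEmb K u.toMul) w = 0 := by
    simp [Finset.sum_sub_distrib, hv, logEmb, sum_mult_mul_log]
  refine ⟨u.toMul, ?_⟩
  calc ‖v - logEmb K u.toMul‖
      ≤ Fintype.card (InfinitePlace K) * ‖(fun w : {w // w ≠ w₀} => v w) - logEmbedding K u‖ :=
        norm_le_card_mul_norm_restrict_of_sum_eq_zero hsum w₀
    _ ≤ Fintype.card (InfinitePlace K) * C := by gcongr; exact hu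

-- Without the bound of `exists_norm_sub_logEmb_le`, the `⨆` in `rhoInf` would be the junk value 0.
theorem iInf_norm_sub_logEmb_le_rhoInf {v : InfinitePlace K → ℝ} (hv : ∑ w, v w = 0) :
    ⨅ u : (𝓞 K)ˣ, ‖v - logEmb K u‖ ≤ rhoInf K := by
  obtain ⟨C, hC⟩ := exists_norm_sub_logEmb_le (K := K)
  refine le_ciSup (f := fun v : {v : InfinitePlace K → ℝ // ∑ w, v w = 0} =>
    ⨅ u : (𝓞 K)ˣ, ‖(v : InfinitePlace K → ℝ) - logEmb K u‖) ⟨C, ?_⟩ ⟨v, hv⟩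
  rintro - ⟨⟨v', hv'⟩, rfl⟩
  obtain ⟨u, hu⟩ := hC v' hv'
  exact (ciInf_le ⟨0, by rintro - ⟨u, rfl⟩; exact norm_nonneg _⟩ u).trans hu

theorem exists_norm_sub_logEmb_lt {v : InfinitePlace K → ℝ} (hv : ∑ w, v w = 0) {r : ℝ}
    (hr : rhoInf K < r) : ∃ u : (𝓞 K)ˣ, ‖v - logEmb K u‖ < r :=
  exists_lt_of_ciInf_lt ((iInf_norm_sub_logEmb_le_rhoInf hv).trans_lt hr)

theorem exists_unit_forall_one_lt_mul {a : K} (ha : a ≠ 0)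
    (h : rhoInf K * Module.finrank ℚ K < Real.log |(Algebra.norm ℚ a : ℝ)|) :
    ∃ u : (𝓞 K)ˣ, ∀ w : InfinitePlace K, 1 < w (a * u) := by
  set d : ℝ := (Module.finrank ℚ K : ℝ)
  have hd : 0 < d := Nat.cast_pos.mpr Module.finrank_pos
  set t := Real.log |(Algebra.norm ℚ a : ℝ)| / d
  -- `logEmb (a u) = ℓ(a) + logEmb u` is close to `ℓ(a) + v = (mult w · t)_w`.
  let v : InfinitePlace K → ℝ := fun w => w.mult * (t - Real.log (w a))
  have hv : ∑ w, v w = 0 := by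
    have hmult : ∑ w : InfinitePlace K, (w.mult : ℝ) = d := by
      rw [← Nat.cast_sum, sum_mult_eq]
    simp only [v, mul_sub, Finset.sum_sub_distrib, ← Finset.sum_mul, hmult,
      sum_mult_mul_log_eq_log_abs_norm ha]
    rw [mul_div_cancel₀ _ hd.ne', sub_self]
  obtain ⟨u, hu⟩ := exists_norm_sub_logEmb_lt hv (r := t) (by rwa [lt_div_iff₀ hd])
  refine ⟨u, fun w => ?_⟩
  have ht : 0 < t := (norm_nonneg _).trans_lt hu
  have hcoord : v w - logEmb K u w < t :=
    (le_abs_self _).trans_lt ((norm_le_pi_norm (v - logEmb K u) w).trans_lt hu)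
  have hlog : 0 < w.mult * Real.log (w (a * u)) := by
    rw [map_mul, Real.log_mul (by simpa using ha) (pos_at_place u w).ne', mul_add]
    simp only [v, logEmb] at hcoord
    nlinarith [one_le_mult (w := w)]
  exact (Real.log_pos_iff (by positivity)).mp (pos_of_mul_pos_right hlog (by positivity))

end NumberField

theorem strictly_large_in_Kj_general (K : Type) [Field K] [NumberField K]
    (j : ℕ) (hj0 : 0 < j)
    (hj : rhoInf K * (Module.finrank ℚ K : ℝ) / Real.log 2 < (j : ℝ))
    (L : Type) [Field L] [NumberField L] [Algebra K L]
    (hsplit : ∀ u : (𝓞 K)ˣ,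
      Polynomial.Splits ((X ^ j - C ((u : 𝓞 K) : K)).map (algebraMap K L)))
    (A : Ideal (𝓞 K)) (hA : A ≠ ⊥) (hA' : A ≠ ⊤) (hP : Submodule.IsPrincipal A) :
    ∃ x : 𝓞 L, Ideal.map (algebraMap (𝓞 K) (𝓞 L)) A = Ideal.span {x} ∧
      ∀ τ : L →+* ℂ, 1 < ‖τ (x : L)‖ := by
  obtain ⟨a, rfl⟩ := hP.principal
  rw [Ne, Submodule.span_singleton_eq_bot] at hA
  have ha : ¬IsUnit a := fun h => hA' (Ideal.span_singleton_eq_top.mpr h)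
  have hlarge :
      rhoInf K * Module.finrank ℚ K < Real.log |(Algebra.norm ℚ ((a : K) ^ j) : ℝ)| := by
    rw [map_pow, Rat.cast_pow, abs_pow, Real.log_pow]
    calc rhoInf K * Module.finrank ℚ K < j * Real.log 2 := by
          rwa [div_lt_iff₀ (Real.log_pos one_lt_two)] at hj
      _ ≤ j * Real.log |(Algebra.norm ℚ (a : K) : ℝ)| := by
          gcongr
          exact RingOfIntegers.two_le_abs_norm hA ha
  obtain ⟨u, hu⟩ := exists_unit_forall_one_lt_mul (pow_ne_zero j (by simpa using hA)) hlarge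
  obtain ⟨η, hη⟩ := exists_unit_pow_eq_algebraMap_of_splits hj0 u (hsplit u)
  refine ⟨algebraMap (𝓞 K) (𝓞 L) a * η, ?_, InfinitePlace.one_lt_norm_of_pow_eq hj0.ne' hu ?_⟩
  · rw [Ideal.submodule_span_eq, Ideal.map_span, Set.image_singleton,
      Ideal.span_singleton_mul_right_unit η.isUnit]
  · have hx : (algebraMap (𝓞 K) (𝓞 L) a * η) ^ j = algebraMap (𝓞 K) (𝓞 L) (a ^ j * u) := by
      rw [mul_pow, hη, ← map_pow, ← map_mul]
    exact congrArg ((↑) : 𝓞 L → L) hx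

/-- Let `j > ρ_∞(K)·[K:ℚ]/log 2` be a positive integer and let `L = K_j` be the extension
of `K` obtained by adjoining all `j`-th roots of every unit of `𝓞 K` (i.e. every polynomial
`X^j - u`, `u ∈ 𝓞_K^×`, splits in `L`, and `L` is generated over `K` by these roots).
Then every nonzero proper principal ideal `𝔄 ⊊ 𝓞 K` is strictly large in `K_j`. -/
theorem strictly_large_in_Kj (K : Type) [Field K] [NumberField K]
    (j : ℕ) (hj0 : 0 < j)
    (hj : rhoInf K * (Module.finrank ℚ K : ℝ) / Real.log 2 < (j : ℝ))
    (L : Type) [Field L] [NumberField L] [Algebra K L]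
    (hsplit : ∀ u : (𝓞 K)ˣ,
      Polynomial.Splits ((X ^ j - C ((u : 𝓞 K) : K)).map (algebraMap K L)))
    (hgen : IntermediateField.adjoin K
      {y : L | ∃ u : (𝓞 K)ˣ, y ^ j = algebraMap K L ((u : 𝓞 K) : K)} = ⊤)
    (A : Ideal (𝓞 K)) (hA : A ≠ ⊥) (hA' : A ≠ ⊤) (hP : Submodule.IsPrincipal A) :
    ∃ x : 𝓞 L, Ideal.map (algebraMap (𝓞 K) (𝓞 L)) A = Ideal.span {x} ∧
      ∀ τ : L →+* ℂ, 1 < ‖τ (x : L)‖ :=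
  strictly_large_in_Kj_general K j hj0 hj L hsplit A hA hA' hP
end

section
/- Let K be a number field of degree d with unit rank r ≥ 1. Then ρ_∞(K) ≥ (d/s)·b(O_K^×), where b(O_K^×) is the infimum of the Weil heights h(u) over all units u ∈ O_K^× that are not roots of unity. -/
/-!
Let `ε` be a fundamental unit and `v = ℓ(ε)/2`, a point of the trace-zero hyperplane. For every
unit `u` we have `v - ℓ(u) = ℓ(ε u⁻²)/2`, and `ε u⁻²` is not a root of unity because `ε` is not a
square modulo torsion. For a unit `z` of infinite order the coordinates of `ℓ(z)` sum to zero, so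
`s ‖ℓ(z)‖_∞ ≥ ∑ |ℓ_w(z)| = 2 ∑ max(0, ℓ_w(z)) = 2 d h(z) ≥ 2 d b`. Hence every lattice point is at
distance at least `(d/s) b` from `v`. The supremum defining `ρ_∞` is finite because the unit lattice
is a full lattice in the hyperplane.
-/

open NumberField

/-- The Weil height of an algebraic integer `x ∈ 𝓞 K`. -/
noncomputable def weilHeight (K : Type) [Field K] [NumberField K] (x : 𝓞 K) : ℝ :=
  (∑ σ : K →+* ℂ, max 0 (Real.log ‖σ (x : K)‖)) / (Module.finrank ℚ K : ℝ)

/-- `b(𝓞_K^×)`: the infimum of the Weil heights of units of `𝓞 K` which are not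
roots of unity. -/
noncomputable def bUnits (K : Type) [Field K] [NumberField K] : ℝ :=
  sInf {t : ℝ | ∃ u : (𝓞 K)ˣ, ¬ IsOfFinOrder u ∧ t = weilHeight K ((u : 𝓞 K))}

open NumberField.InfinitePlace NumberField.Units NumberField.Units.dirichletUnitTheorem Finset

theorem Module.Basis.apply_ne_two_nsmul {ι M : Type*} [AddCommGroup M]
    (b : Module.Basis ι ℤ M) (i : ι) (x : M) : b i ≠ 2 • x := by
  intro h
  have := congr(b.repr $h i)
  simp only [Module.Basis.repr_self, Finsupp.single_eq_same, map_nsmul, Finsupp.smul_apply,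
    nsmul_eq_mul, Nat.cast_ofNat] at this
  omega

theorem ZLattice.exists_forall_exists_norm_sub_le {E : Type*} [NormedAddCommGroup E]
    [NormedSpace ℝ E] [FiniteDimensional ℝ E] (L : Submodule ℤ E) [DiscreteTopology L]
    [IsZLattice ℝ L] : ∃ R, ∀ x : E, ∃ y ∈ L, ‖x - y‖ ≤ R := by
  let b := (Module.Free.chooseBasis ℤ L).ofZLatticeBasis ℝ L
  refine ⟨∑ i, ‖b i‖, fun x => ⟨ZSpan.floor b x, ?_, ZSpan.norm_fract_le b x⟩⟩
  exact (Module.Basis.ofZLatticeBasis_span ℝ L _).le (ZSpan.floor b x).2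

theorem norm_le_card_mul_of_sum_eq_zero {ι : Type*} [Fintype ι] {g : ι → ℝ}
    (hg : ∑ i, g i = 0) {R : ℝ} (hR : 0 ≤ R) (i₀ : ι) (h : ∀ i ≠ i₀, |g i| ≤ R) :
    ‖g‖ ≤ Fintype.card ι * R := by
  classical
  have hcard : (1 : ℝ) ≤ Fintype.card ι := Nat.one_le_cast.mpr (Fintype.card_pos_iff.mpr ⟨i₀⟩)
  refine (pi_norm_le_iff_of_nonneg (by positivity)).2 fun i => ?_
  rw [Real.norm_eq_abs]
  by_cases hi : i = i₀
  · subst hi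
    have hgi : g i = -∑ j ∈ univ.erase i, g j := by
      rw [← add_sum_erase _ _ (mem_univ i)] at hg
      linarith
    calc |g i| = |∑ j ∈ univ.erase i, g j| := by rw [hgi, abs_neg]
      _ ≤ ∑ j ∈ univ.erase i, |g j| := abs_sum_le_sum_abs _ _
      _ ≤ #(univ.erase i) • R := sum_le_card_nsmul _ _ _ fun j hj => h j (ne_of_mem_erase hj)
      _ ≤ Fintype.card ι * R := by
        rw [nsmul_eq_mul]
        gcongr
        exact_mod_cast card_le_univ _
  · exact (h i hi).trans (le_mul_of_one_le_left hR hcard)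

theorem NumberField.InfinitePlace.sum_embeddings_eq_sum_mult_mul {K : Type*} [Field K]
    [NumberField K] (F : ℝ → ℝ) (x : K) :
    ∑ φ : K →+* ℂ, F ‖φ x‖ = ∑ w : InfinitePlace K, w.mult * F (w x) := by
  classical
  rw [← univ.sum_fiberwise (fun φ => InfinitePlace.mk φ)]
  refine sum_congr rfl fun w _ => ?_
  have hfiber : ∀ φ ∈ univ.filter (fun φ => InfinitePlace.mk φ = w), F ‖φ x‖ = F (w x) :=
    fun φ hφ => by rw [← (mem_filter.mp hφ).2, InfinitePlace.apply]
  rw [sum_congr rfl hfiber, sum_const, card_filter_mk_eq, nsmul_eq_mul]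

section logEmb

variable {K : Type} [Field K] [NumberField K]

theorem sum_logEmb (u : (𝓞 K)ˣ) : ∑ w, logEmb K u w = 0 := sum_mult_mul_log u

theorem logEmb_mul (x y : (𝓞 K)ˣ) : logEmb K (x * y) = logEmb K x + logEmb K y := by
  ext w
  simp only [logEmb, Pi.add_apply, NumberField.Units.coe_mul, map_mul,
    Real.log_mul (pos_at_place x w).ne' (pos_at_place y w).ne', mul_add]

theorem logEmb_div (x y : (𝓞 K)ˣ) : logEmb K (x / y) = logEmb K x - logEmb K y := by
  rw [eq_sub_iff_add_eq, ← logEmb_mul, div_mul_cancel]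

theorem exists_forall_exists_norm_sub_logEmb_le :
    ∃ R, ∀ v : InfinitePlace K → ℝ, ∑ w, v w = 0 → ∃ u : (𝓞 K)ˣ, ‖v - logEmb K u‖ ≤ R := by
  classical
  obtain ⟨R, hR⟩ := ZLattice.exists_forall_exists_norm_sub_le (E := logSpace K) (unitLattice K)
  refine ⟨Fintype.card (InfinitePlace K) * R, fun v hv => ?_⟩
  obtain ⟨y, hy, hvy⟩ := hR fun w => v w.1
  obtain ⟨z, -, rfl⟩ := Submodule.mem_map.mp hy
  refine ⟨z.toMul, norm_le_card_mul_of_sum_eq_zero ?_ ((norm_nonneg _).trans hvy) w₀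
    fun w hw => (norm_le_pi_norm _ ⟨w, hw⟩).trans hvy⟩
  simp only [Pi.sub_apply, sum_sub_distrib, hv, sum_logEmb, sub_zero]

theorem bddAbove_range_iInf_norm_sub_logEmb :
    BddAbove (Set.range fun v : {v : InfinitePlace K → ℝ // ∑ w, v w = 0} =>
      ⨅ u : (𝓞 K)ˣ, ‖(v : InfinitePlace K → ℝ) - logEmb K u‖) := by
  obtain ⟨R, hR⟩ := exists_forall_exists_norm_sub_logEmb_le (K := K)
  refine ⟨R, Set.forall_mem_range.2 fun v => ?_⟩
  obtain ⟨u, hu⟩ := hR v.1 v.2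
  exact (ciInf_le ⟨0, Set.forall_mem_range.2 fun _ => norm_nonneg _⟩ u).trans hu

theorem finrank_mul_weilHeight (x : 𝓞 K) :
    Module.finrank ℚ K * weilHeight K x =
      ∑ w : InfinitePlace K, w.mult * max 0 (Real.log (w x)) := by
  rw [weilHeight, mul_div_cancel₀ _ (Nat.cast_ne_zero.mpr Module.finrank_pos.ne')]
  exact sum_embeddings_eq_sum_mult_mul (fun t => max 0 (Real.log t)) _

theorem sum_abs_logEmb (u : (𝓞 K)ˣ) :
    ∑ w, |logEmb K u w| = 2 * (Module.finrank ℚ K * weilHeight K u) := by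
  have habs (a : ℝ) : |a| = 2 * max 0 a - a := by
    rcases le_total a 0 with h | h
    · rw [abs_of_nonpos h, max_eq_left h]; ring
    · rw [abs_of_nonneg h, max_eq_right h]; ring
  rw [finrank_mul_weilHeight, mul_sum]
  simp_rw [habs, sum_sub_distrib, sum_logEmb, sub_zero]
  refine sum_congr rfl fun w _ => ?_
  rw [logEmb, mul_max_of_nonneg _ _ (Nat.cast_nonneg _), mul_zero]

theorem bUnits_le_weilHeight (u : (𝓞 K)ˣ) (hu : u ∉ torsion K) :
    bUnits K ≤ weilHeight K u := by
  refine csInf_le ⟨0, ?_⟩ ⟨u, (CommGroup.mem_torsion _).not.mp hu, rfl⟩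
  rintro _ ⟨x, -, rfl⟩
  exact div_nonneg (sum_nonneg fun _ _ => le_max_left _ _) (Nat.cast_nonneg _)

theorem finrank_div_card_mul_bUnits_le_norm_logEmb (u : (𝓞 K)ˣ) (hu : u ∉ torsion K) :
    (Module.finrank ℚ K : ℝ) / Fintype.card (InfinitePlace K) * bUnits K ≤
      ‖logEmb K u‖ / 2 := by
  have hs : (0 : ℝ) < Fintype.card (InfinitePlace K) := Nat.cast_pos.mpr Fintype.card_pos
  have hsum : ∑ w, |logEmb K u w| ≤ Fintype.card (InfinitePlace K) * ‖logEmb K u‖ := by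
    simpa using sum_le_card_nsmul univ _ _ fun w _ => norm_le_pi_norm (logEmb K u) w
  calc _ ≤ (Module.finrank ℚ K : ℝ) / Fintype.card (InfinitePlace K) * weilHeight K u := by
        gcongr
        exact bUnits_le_weilHeight u hu
    _ = (∑ w, |logEmb K u w|) / (2 * Fintype.card (InfinitePlace K)) := by
        rw [sum_abs_logEmb]
        field_simp
    _ ≤ ‖logEmb K u‖ / 2 := by rw [div_le_iff₀ (by positivity)]; linarith

theorem fundSystem_div_sq_notMem_torsion (i : Fin (rank K)) (u : (𝓞 K)ˣ) :
    fundSystem K i / u ^ 2 ∉ torsion K := by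
  intro h
  apply (basisModTorsion K).apply_ne_two_nsmul (M := Additive ((𝓞 K)ˣ ⧸ torsion K)) i
    (Additive.ofMul (QuotientGroup.mk u))
  have hmk : (QuotientGroup.mk (fundSystem K i) : (𝓞 K)ˣ ⧸ torsion K) =
      QuotientGroup.mk u ^ 2 := by
    rwa [← div_eq_one, ← QuotientGroup.mk_pow, ← QuotientGroup.mk_div, QuotientGroup.eq_one_iff]
  rw [← fundSystem_mk, hmk, ofMul_pow]

end logEmb

/-- For a number field `K` of degree `d` with unit rank `r ≥ 1`,
`ρ_∞(K) ≥ (d/s)·b(𝓞_K^×)`, where `s` is the number of infinite places. -/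
theorem rhoInf_ge_bUnits (K : Type) [Field K] [NumberField K]
    (hr : 1 ≤ NumberField.Units.rank K) :
    (Module.finrank ℚ K : ℝ) / (Fintype.card (NumberField.InfinitePlace K) : ℝ) *
      bUnits K ≤ rhoInf K := by
  let f := fundSystem K ⟨0, hr⟩
  let v : {v : InfinitePlace K → ℝ // ∑ w, v w = 0} :=
    ⟨(2 : ℝ)⁻¹ • logEmb K f, by simp only [Pi.smul_apply, ← smul_sum, sum_logEmb, smul_zero]⟩
  refine le_trans (le_ciInf fun u => ?_) (le_ciSup bddAbove_range_iInf_norm_sub_logEmb v)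
  have hv : v.1 - logEmb K u = (2 : ℝ)⁻¹ • logEmb K (f / u ^ 2) := by
    rw [logEmb_div, pow_two, logEmb_mul]
    module
  rw [hv, norm_smul, Real.norm_of_nonneg (by norm_num), inv_mul_eq_div]
  exact finrank_div_card_mul_bUnits_le_norm_logEmb _ (fundSystem_div_sq_notMem_torsion _ u)
end
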